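/- arXiv:2101.01206 — 3 statements merged into one kernel-verified Lean document; each statement's English description precedes it below -/
import Mathlib

section
/- Let λ ∈ (0, 1/2), n ≥ 2, and let λ̃ = (λ^((n−1)/n) + (1−λ)^((n−1)/n) − 1)^(−1). Let N : [1, ∞) → ℝ be any function satisfying N(X) = X^((n−1)/n) for X ∈ [1,2) and N(X) ≤ X^((n−1)/n) + sup_{t ∈ [λ, 1−λ], tX ≥ 1, (1−t)X ≥ 1} (N(tX) + N((1−t)X)) for X ≥ 2. Then N(X) + λ̃·X^((n−1)/n) ≤ (1+λ̃)·X for all X ≥ 1. -/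
/-- abstract superadditive-recursion bound.  A function `N` on `[1,∞)`
with `N X = X^((n−1)/n)` on `[1,2)` and satisfying
`N X ≤ X^((n−1)/n) + sup_{t∈[λ,1−λ], tX ≥ 1, (1−t)X ≥ 1} (N(tX) + N((1−t)X))`
satisfies `N X + λ̃·X^((n−1)/n) ≤ (1+λ̃)·X` for all `X ≥ 1`, where
`λ̃ = (λ^((n−1)/n)+(1−λ)^((n−1)/n)−1)⁻¹`. -/
theorem stmt_2 (n : ℕ) (hn : 2 ≤ n) (lam : ℝ) (h0 : 0 < lam) (h1 : lam < 1/2)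
    (N : ℝ → ℝ)
    (hbase : ∀ X : ℝ, 1 ≤ X → X < 2 → N X = X ^ (((n : ℝ) - 1) / n))
    (hrec : ∀ X : ℝ, 1 ≤ X → N X ≤ X ^ (((n : ℝ) - 1) / n) +
      sSup {y : ℝ | ∃ t : ℝ, lam ≤ t ∧ t ≤ 1 - lam ∧ 1 ≤ t * X ∧ 1 ≤ (1 - t) * X ∧
        y = N (t * X) + N ((1 - t) * X)}) :
    ∀ X : ℝ, 1 ≤ X →
      N X + (lam ^ (((n : ℝ) - 1) / n) + (1 - lam) ^ (((n : ℝ) - 1) / n) - 1)⁻¹ *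
          X ^ (((n : ℝ) - 1) / n) ≤
        (1 + (lam ^ (((n : ℝ) - 1) / n) + (1 - lam) ^ (((n : ℝ) - 1) / n) - 1)⁻¹) * X := by
  have hn2 : (2:ℝ) ≤ (n:ℝ) := by exact_mod_cast hn
  set α : ℝ := ((n : ℝ) - 1) / n with hαdef
  have hα0 : 0 < α := by
    apply div_pos <;> linarith
  have hα1 : α < 1 := by
    rw [div_lt_one (by linarith)]; linarith
  have hl1 : lam < 1 := by linarith
  have hsum : 1 < lam ^ α + (1 - lam) ^ α := by
    have h2 : (1 - lam) ^ (1:ℝ) < (1 - lam) ^ α :=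
      Real.rpow_lt_rpow_of_exponent_gt (by linarith) (by linarith) hα1
    have h3 : lam ^ (1:ℝ) ≤ lam ^ α :=
      Real.rpow_le_rpow_of_exponent_ge h0 hl1.le hα1.le
    rw [Real.rpow_one] at h2 h3
    linarith
  have hs0 : lam ^ α + (1 - lam) ^ α - 1 ≠ 0 := by linarith
  set c : ℝ := (lam ^ α + (1 - lam) ^ α - 1)⁻¹ with hcdef
  have hc0 : 0 < c := inv_pos.2 (by linarith)
  have e0 : c * (lam ^ α + (1 - lam) ^ α) = c + 1 := by
    rw [hcdef]; field_simp; ring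
  have hconc : ∀ t : ℝ, lam ≤ t → t ≤ 1 - lam →
      lam ^ α + (1 - lam) ^ α ≤ t ^ α + (1 - t) ^ α := by
    intro t ht1 ht2
    have hd : 0 < 1 - 2 * lam := by linarith
    set a : ℝ := ((1 - lam) - t) / (1 - 2 * lam) with ha
    set b : ℝ := (t - lam) / (1 - 2 * lam) with hb
    have ha0 : 0 ≤ a := div_nonneg (by linarith) hd.le
    have hb0 : 0 ≤ b := div_nonneg (by linarith) hd.le
    have hab : a + b = 1 := by rw [ha, hb, ← add_div, div_eq_one_iff_eq hd.ne']; ring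
    have C := Real.concaveOn_rpow hα0.le hα1.le
    have i1 := C.2 (Set.mem_Ici.2 h0.le)
      (Set.mem_Ici.2 (by linarith : (0:ℝ) ≤ 1 - lam)) ha0 hb0 hab
    have i2 := C.2 (Set.mem_Ici.2 (by linarith : (0:ℝ) ≤ 1 - lam))
      (Set.mem_Ici.2 h0.le) ha0 hb0 hab
    simp only [smul_eq_mul] at i1 i2
    have h1 : a * lam + b * (1 - lam) = t := by
      rw [ha, hb, div_mul_eq_mul_div, div_mul_eq_mul_div, ← add_div, div_eq_iff hd.ne']; ring
    have h2 : a * (1 - lam) + b * lam = 1 - t := by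
      rw [ha, hb, div_mul_eq_mul_div, div_mul_eq_mul_div, ← add_div, div_eq_iff hd.ne']; ring
    rw [h1] at i1
    rw [h2] at i2
    have key : a * lam ^ α + b * (1 - lam) ^ α + (a * (1 - lam) ^ α + b * lam ^ α)
        = lam ^ α + (1 - lam) ^ α := by
      linear_combination (lam ^ α + (1 - lam) ^ α) * hab
    linarith
  have hlam1 : 0 < 1 - lam := by linarith
  have main : ∀ k : ℕ, ∀ X : ℝ, 1 ≤ X → X * (1 - lam) ^ k < 2 →
      N X + c * X ^ α ≤ (1 + c) * X := by
    intro k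
    induction k with
    | zero =>
      intro X hX hXlt
      simp only [pow_zero, mul_one] at hXlt
      rw [hbase X hX hXlt]
      have hXα : X ^ α ≤ X := by
        calc X ^ α ≤ X ^ (1:ℝ) := Real.rpow_le_rpow_of_exponent_le hX hα1.le
        _ = X := Real.rpow_one X
      nlinarith
    | succ k ih =>
      intro X hX hXlt
      have hXα : X ^ α ≤ X := by
        calc X ^ α ≤ X ^ (1:ℝ) := Real.rpow_le_rpow_of_exponent_le hX hα1.le
        _ = X := Real.rpow_one X
      by_cases h2 : X < 2
      · rw [hbase X hX h2]
        nlinarith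
      · push_neg at h2
        have hX0 : (0:ℝ) < X := by linarith
        have hXα0 : (0:ℝ) ≤ X ^ α := Real.rpow_nonneg hX0.le α
        have hkey : sSup {y : ℝ | ∃ t : ℝ, lam ≤ t ∧ t ≤ 1 - lam ∧ 1 ≤ t * X ∧
              1 ≤ (1 - t) * X ∧ y = N (t * X) + N ((1 - t) * X)} ≤
            (1 + c) * X - (1 + c) * X ^ α := by
          apply Real.sSup_le
          · rintro y ⟨t, ht1, ht2, htX, htX', rfl⟩
            have ht0 : (0:ℝ) ≤ t := by linarith
            have ht0' : (0:ℝ) ≤ 1 - t := by linarith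
            have hpk : (0:ℝ) ≤ (1 - lam) ^ k := pow_nonneg hlam1.le k
            have hb1 : N (t * X) + c * (t * X) ^ α ≤ (1 + c) * (t * X) := by
              apply ih _ htX
              calc t * X * (1 - lam) ^ k ≤ (1 - lam) * X * (1 - lam) ^ k :=
                    mul_le_mul_of_nonneg_right
                      (mul_le_mul_of_nonneg_right ht2 hX0.le) hpk
                _ = X * (1 - lam) ^ (k + 1) := by ring
                _ < 2 := hXlt
            have hb2 : N ((1 - t) * X) + c * ((1 - t) * X) ^ α ≤ (1 + c) * ((1 - t) * X) := by
              apply ih _ htX'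
              calc (1 - t) * X * (1 - lam) ^ k ≤ (1 - lam) * X * (1 - lam) ^ k :=
                    mul_le_mul_of_nonneg_right
                      (mul_le_mul_of_nonneg_right (by linarith : 1 - t ≤ 1 - lam) hX0.le) hpk
                _ = X * (1 - lam) ^ (k + 1) := by ring
                _ < 2 := hXlt
            rw [Real.mul_rpow ht0 hX0.le] at hb1
            rw [Real.mul_rpow ht0' hX0.le] at hb2
            have hcc := hconc t ht1 ht2
            have e2 : (c + 1) ≤ c * (t ^ α + (1 - t) ^ α) := by
              rw [← e0]; exact mul_le_mul_of_nonneg_left hcc hc0.le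
            have e3 : (c + 1) * X ^ α ≤ c * (t ^ α + (1 - t) ^ α) * X ^ α :=
              mul_le_mul_of_nonneg_right e2 hXα0
            have e4 : (1 + c) * (t * X) + (1 + c) * ((1 - t) * X) = (1 + c) * X := by ring
            have e5 : c * (t ^ α * X ^ α) + c * ((1 - t) ^ α * X ^ α)
                = c * (t ^ α + (1 - t) ^ α) * X ^ α := by ring
            linarith
          · nlinarith
        have := hrec X hX
        linarith
  intro X hX
  have hX0 : (0:ℝ) < X := by linarith
  obtain ⟨k, hk⟩ := exists_pow_lt_of_lt_one (div_pos (by norm_num) hX0 : (0:ℝ) < 2 / X)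
    (by linarith : 1 - lam < 1)
  have hXk : X * (1 - lam) ^ k < 2 := by
    have := (lt_div_iff₀ hX0).1 hk
    linarith [this]
  exact main k X hX hXk
end

section
/- Let k be a positive integer, and let a compact set N of finite measure |N| = 1 be partitioned (up to boundary) into finitely many pieces N_α indexed by the leaves of an admissible binary tree, where each leaf piece satisfies |N_α| < 50^n/k and, for each internal node α, |N_{α0}|, |N_{α1}| ≥ |N_α|/25^n with |N_α| = |N_{α0}| + |N_{α1}|, and |N_α| ≥ 50^n/k at internal nodes. Set k_α = k|N_α|. Then Σ over internal nodes α of |N_α|^((n−1)/n), plus 1, is at most (1 + λ̃)·k^(1/n), where λ̃ = ((1/50^n)^((n−1)/n) + (1 − 1/50^n)^((n−1)/n) − 1)^(−1). -/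
/-!
Put `θ = (n - 1)/n` and `δ = 50⁻ⁿ`. The non-root nodes of an admissible tree are exactly the
children of its internal nodes, so for any weights `g` the sum of `g` over the leaves is `g` at
the root plus the sum over internal nodes `γ` of the gains `g(γ0) + g(γ1) - g(γ)`. For `g = f`
all gains vanish, so the leaves carry total mass `1`. For `g = f ^ θ`, concavity of
`t ↦ t ^ θ + (1 - t) ^ θ` shows that a split into children of mass at least `δ f(γ)` gains at
least `c f(γ) ^ θ`, where `c = δ ^ θ + (1 - δ) ^ θ - 1 > 0`. Every leaf is the root or a child
of an internal node, so it has mass at least `1/k`, and then `f ^ θ ≤ k ^ (1/n) f`. Hence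
`1 + c Σ_{internal} f ^ θ ≤ Σ_{leaves} f ^ θ ≤ k ^ (1/n)`.
-/

open Finset

namespace BinaryTree

def internalNodes (Λ : Finset (List Bool)) : Finset (List Bool) :=
  Λ.filter (fun α => α ++ [false] ∈ Λ)

def leaves (Λ : Finset (List Bool)) : Finset (List Bool) :=
  Λ.filter (fun α => α ++ [false] ∉ Λ)

structure IsAdmissible (Λ : Finset (List Bool)) : Prop where
  nil_mem : [] ∈ Λ
  mem_of_append_mem : ∀ α b, α ++ [b] ∈ Λ → α ∈ Λ
  append_false_mem_iff : ∀ α, α ++ [false] ∈ Λ ↔ α ++ [true] ∈ Λ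

variable {Λ : Finset (List Bool)}

theorem IsAdmissible.append_mem (hΛ : IsAdmissible Λ) {γ : List Bool}
    (hγ : γ ∈ internalNodes Λ) (b : Bool) : γ ++ [b] ∈ Λ := by
  have hγ0 := (mem_filter.1 hγ).2
  cases b
  · exact hγ0
  · exact (hΛ.append_false_mem_iff γ).1 hγ0

theorem IsAdmissible.exists_internalNodes_append_eq (hΛ : IsAdmissible Λ) {α : List Bool}
    (hα : α ∈ Λ) (hne : α ≠ []) : ∃ γ ∈ internalNodes Λ, ∃ b, γ ++ [b] = α := by
  obtain ⟨γ, b, rfl⟩ := (List.eq_nil_or_concat' α).resolve_left hne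
  refine ⟨γ, mem_filter.2 ⟨hΛ.mem_of_append_mem γ b hα, ?_⟩, b, rfl⟩
  cases b
  · exact hα
  · exact (hΛ.append_false_mem_iff γ).2 hα

theorem IsAdmissible.sum_erase_nil {M : Type*} [AddCommMonoid M] (hΛ : IsAdmissible Λ)
    (g : List Bool → M) :
    ∑ α ∈ Λ.erase [], g α = ∑ γ ∈ internalNodes Λ, (g (γ ++ [false]) + g (γ ++ [true])) := by
  have hchildren : Λ.erase [] = (internalNodes Λ ×ˢ univ).image (fun p => p.1 ++ [p.2]) := by
    ext α
    simp only [mem_erase, mem_image, mem_product, mem_univ, and_true, Prod.exists]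
    constructor
    · rintro ⟨hne, hα⟩
      obtain ⟨γ, hγ, b, rfl⟩ := hΛ.exists_internalNodes_append_eq hα hne
      exact ⟨γ, b, hγ, rfl⟩
    · rintro ⟨γ, b, hγ, rfl⟩
      exact ⟨by simp, hΛ.append_mem hγ b⟩
  rw [hchildren, sum_image, sum_product]
  · simp only [Fintype.sum_bool, add_comm]
  · rintro ⟨γ, b⟩ - ⟨γ', b'⟩ - h
    simpa using h

theorem IsAdmissible.sum_leaves {G : Type*} [AddCommGroup G] (hΛ : IsAdmissible Λ)
    (g : List Bool → G) :
    ∑ α ∈ leaves Λ, g α =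
      g [] + ∑ γ ∈ internalNodes Λ, (g (γ ++ [false]) + g (γ ++ [true]) - g γ) := by
  have hsplit := sum_filter_add_sum_filter_not Λ (fun α => α ++ [false] ∈ Λ) g
  rw [← add_sum_erase _ _ hΛ.nil_mem, hΛ.sum_erase_nil] at hsplit
  rw [sum_sub_distrib, ← add_sub_assoc, ← hsplit]
  unfold leaves internalNodes
  abel

theorem IsAdmissible.sum_leaves_of_additive (hΛ : IsAdmissible Λ) {f : List Bool → ℝ}
    (hadd : ∀ γ ∈ internalNodes Λ, f γ = f (γ ++ [false]) + f (γ ++ [true])) :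
    ∑ α ∈ leaves Λ, f α = f [] := by
  rw [hΛ.sum_leaves, add_eq_left]
  exact sum_eq_zero fun γ hγ ↦ by linarith [hadd γ hγ]

theorem IsAdmissible.le_of_mem_leaves {β : Type*} [Preorder β] (hΛ : IsAdmissible Λ)
    {g : List Bool → β} {m : β} (hroot : m ≤ g [])
    (hchild : ∀ γ ∈ internalNodes Λ, ∀ b, m ≤ g (γ ++ [b])) :
    ∀ α ∈ leaves Λ, m ≤ g α := by
  intro α hα
  obtain rfl | hne := eq_or_ne α []
  · exact hroot
  obtain ⟨γ, hγ, b, rfl⟩ := hΛ.exists_internalNodes_append_eq (mem_filter.1 hα).1 hne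
  exact hchild γ hγ b

end BinaryTree

namespace Real

theorem concaveOn_rpow_add_one_sub_rpow {p : ℝ} (hp0 : 0 ≤ p) (hp1 : p ≤ 1) :
    ConcaveOn ℝ (Set.Icc 0 1) (fun t : ℝ => t ^ p + (1 - t) ^ p) := by
  have hleft := (concaveOn_rpow hp0 hp1).subset Set.Icc_subset_Ici_self (convex_Icc 0 1)
  have hright :=
    (concaveOn_rpow hp0 hp1).comp_affineMap (AffineMap.const ℝ ℝ (1 : ℝ) - AffineMap.id ℝ ℝ)
  refine hleft.add (hright.subset (fun t ht => ?_) (convex_Icc 0 1))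
  simpa using ht.2

theorem rpow_add_one_sub_rpow_le_of_mem_Icc {p δ t : ℝ} (hp0 : 0 ≤ p) (hp1 : p ≤ 1)
    (hδ : 0 ≤ δ) (ht : t ∈ Set.Icc δ (1 - δ)) :
    δ ^ p + (1 - δ) ^ p ≤ t ^ p + (1 - t) ^ p := by
  have hδ1 : δ ≤ 1 := by linarith [ht.1, ht.2]
  have hmin := (concaveOn_rpow_add_one_sub_rpow hp0 hp1).min_le_of_mem_Icc
    ⟨hδ, hδ1⟩ ⟨by linarith, by linarith⟩ ht
  rwa [sub_sub_cancel, add_comm ((1 - δ) ^ p), min_self] at hmin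

theorem mul_add_rpow_le_rpow_add_rpow {p δ y z : ℝ} (hp0 : 0 ≤ p) (hp1 : p ≤ 1)
    (hδ : 0 ≤ δ) (hyz : 0 < y + z) (hy : δ * (y + z) ≤ y) (hz : δ * (y + z) ≤ z) :
    (δ ^ p + (1 - δ) ^ p) * (y + z) ^ p ≤ y ^ p + z ^ p := by
  set t := y / (y + z)
  have hy_eq : y = t * (y + z) := (div_mul_cancel₀ y hyz.ne').symm
  have hz_eq : z = (1 - t) * (y + z) := by rw [sub_mul, one_mul, ← hy_eq]; ring
  have ht : t ∈ Set.Icc δ (1 - δ) :=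
    ⟨(le_div_iff₀ hyz).2 hy,
      le_sub_comm.1 (le_of_mul_le_mul_right (by rwa [← hz_eq]) hyz)⟩
  have ht0 : 0 ≤ t := hδ.trans ht.1
  have ht1 : 0 ≤ 1 - t := hδ.trans (le_sub_comm.1 ht.2)
  calc (δ ^ p + (1 - δ) ^ p) * (y + z) ^ p
      ≤ (t ^ p + (1 - t) ^ p) * (y + z) ^ p :=
        mul_le_mul_of_nonneg_right (rpow_add_one_sub_rpow_le_of_mem_Icc hp0 hp1 hδ ht)
          (rpow_nonneg hyz.le p)
    _ = y ^ p + z ^ p := by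
        rw [add_mul, ← mul_rpow ht0 hyz.le, ← mul_rpow ht1 hyz.le, ← hy_eq, ← hz_eq]

theorem one_lt_rpow_add_one_sub_rpow {p δ : ℝ} (hp : p < 1) (hδ0 : 0 < δ) (hδ1 : δ < 1) :
    1 < δ ^ p + (1 - δ) ^ p := by
  linarith [self_lt_rpow_of_lt_one hδ0 hδ1 hp,
    self_lt_rpow_of_lt_one (sub_pos.2 hδ1) (sub_lt_self 1 hδ0) hp]

theorem rpow_one_sub_le_mul_rpow {q x K : ℝ} (hq : 0 ≤ q) (hx : 0 < x) (hK : 1 ≤ K * x) :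
    x ^ (1 - q) ≤ x * K ^ q := by
  have hK0 : 0 ≤ K := nonneg_of_mul_nonneg_left (zero_le_one.trans hK) hx
  rw [rpow_sub hx, rpow_one, div_le_iff₀ (rpow_pos_of_pos hx q), mul_assoc, ← mul_rpow hK0 hx.le]
  exact le_mul_of_one_le_right hx.le (one_le_rpow hK hq)

end Real

namespace BinaryTree

variable {Λ : Finset (List Bool)}

theorem IsAdmissible.rpow_nil_add_mul_sum_internalNodes_le (hΛ : IsAdmissible Λ)
    {p δ : ℝ} {f : List Bool → ℝ} (hp0 : 0 ≤ p) (hp1 : p ≤ 1) (hδ : 0 ≤ δ)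
    (hpos : ∀ α ∈ Λ, 0 < f α)
    (hadd : ∀ γ ∈ internalNodes Λ, f γ = f (γ ++ [false]) + f (γ ++ [true]))
    (hchild : ∀ γ ∈ internalNodes Λ, ∀ b, δ * f γ ≤ f (γ ++ [b])) :
    f [] ^ p + (δ ^ p + (1 - δ) ^ p - 1) * ∑ γ ∈ internalNodes Λ, f γ ^ p ≤
      ∑ α ∈ leaves Λ, f α ^ p := by
  rw [hΛ.sum_leaves, mul_sum, add_le_add_iff_left]
  refine sum_le_sum fun γ hγ ↦ ?_
  have hsum := hadd γ hγ
  have hbal := Real.mul_add_rpow_le_rpow_add_rpow hp0 hp1 hδ (hsum ▸ hpos γ (mem_filter.1 hγ).1)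
    (hsum ▸ hchild γ hγ false) (hsum ▸ hchild γ hγ true)
  rw [← hsum] at hbal
  linarith

theorem IsAdmissible.sum_internalNodes_rpow_add_one_le (hΛ : IsAdmissible Λ)
    {q δ K : ℝ} {f : List Bool → ℝ} (hq0 : 0 < q) (hq1 : q ≤ 1) (hδ0 : 0 < δ) (hδ1 : δ < 1)
    (hK : 1 ≤ K) (hf_nil : f [] = 1) (hpos : ∀ α ∈ Λ, 0 < f α)
    (hadd : ∀ γ ∈ internalNodes Λ, f γ = f (γ ++ [false]) + f (γ ++ [true]))
    (hchild : ∀ γ ∈ internalNodes Λ, ∀ b, δ * f γ ≤ f (γ ++ [b]))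
    (hinternal : ∀ γ ∈ internalNodes Λ, 1 ≤ K * (δ * f γ)) :
    ∑ γ ∈ internalNodes Λ, f γ ^ (1 - q) + 1 ≤
      (1 + (δ ^ (1 - q) + (1 - δ) ^ (1 - q) - 1)⁻¹) * K ^ q := by
  set c := δ ^ (1 - q) + (1 - δ) ^ (1 - q) - 1
  have hc : 0 < c := sub_pos.2 (Real.one_lt_rpow_add_one_sub_rpow (by linarith) hδ0 hδ1)
  have hleaf_mass : ∀ α ∈ leaves Λ, 1 ≤ K * f α :=
    hΛ.le_of_mem_leaves (by rwa [hf_nil, mul_one]) fun γ hγ b ↦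
      (hinternal γ hγ).trans (mul_le_mul_of_nonneg_left (hchild γ hγ b) (by linarith))
  have hleaves : ∑ α ∈ leaves Λ, f α ^ (1 - q) ≤ K ^ q := calc
    _ ≤ ∑ α ∈ leaves Λ, f α * K ^ q := sum_le_sum fun α hα ↦
        Real.rpow_one_sub_le_mul_rpow hq0.le (hpos α (mem_filter.1 hα).1) (hleaf_mass α hα)
    _ = K ^ q := by rw [← sum_mul, hΛ.sum_leaves_of_additive hadd, hf_nil, one_mul]
  have hgain := hΛ.rpow_nil_add_mul_sum_internalNodes_le (sub_nonneg.2 hq1)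
    (sub_le_self 1 hq0.le) hδ0.le hpos hadd hchild
  rw [hf_nil, Real.one_rpow] at hgain
  have hB : ∑ γ ∈ internalNodes Λ, f γ ^ (1 - q) ≤ c⁻¹ * K ^ q := by
    rw [inv_mul_eq_div, le_div_iff₀ hc]
    linarith
  rw [add_mul, one_mul]
  linarith [Real.one_le_rpow hK hq0.le]

end BinaryTree

open BinaryTree

theorem stmt_12_general (n : ℕ) (hn : 2 ≤ n) (k : ℕ) (hk : 1 ≤ k)
    (Λ : Finset (List Bool)) (f : List Bool → ℝ)
    (hroot : [] ∈ Λ) (hf_root : f [] = 1)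
    (hprefix : ∀ α ∈ Λ, ∀ β : List Bool, β <+: α → β ∈ Λ)
    (hsib : ∀ α : List Bool, α ++ [false] ∈ Λ ↔ α ++ [true] ∈ Λ)
    (hpos : ∀ α ∈ Λ, 0 < f α)
    (hsplit : ∀ α ∈ Λ, α ++ [false] ∈ Λ →
      f α = f (α ++ [false]) + f (α ++ [true]) ∧
      f α / 25 ^ n ≤ f (α ++ [false]) ∧ f α / 25 ^ n ≤ f (α ++ [true]))
    (hinternal : ∀ α ∈ Λ, α ++ [false] ∈ Λ → 50 ^ n / (k : ℝ) ≤ f α) :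
    (∑ α ∈ Λ.filter (fun α => α ++ [false] ∈ Λ), f α ^ (((n : ℝ) - 1) / n)) + 1 ≤
      (1 + ((1 / 50 ^ n : ℝ) ^ (((n : ℝ) - 1) / n) +
          (1 - (1 / 50 ^ n : ℝ)) ^ (((n : ℝ) - 1) / n) - 1)⁻¹) *
        (k : ℝ) ^ ((1 : ℝ) / n) := by
  have hΛ : IsAdmissible Λ := ⟨hroot, fun α b h ↦ hprefix _ h α (List.prefix_append α [b]), hsib⟩
  have hn' : (2 : ℝ) ≤ n := by exact_mod_cast hn
  have hk' : (1 : ℝ) ≤ k := by exact_mod_cast hk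
  have hchild : ∀ γ ∈ internalNodes Λ, ∀ b, 1 / 50 ^ n * f γ ≤ f (γ ++ [b]) := by
    intro γ hγ b
    obtain ⟨hγΛ, hγ0⟩ := mem_filter.1 hγ
    have h2550 : 1 / 50 ^ n * f γ ≤ f γ / 25 ^ n := by
      rw [one_div_mul_eq_div]
      exact div_le_div_of_nonneg_left (hpos γ hγΛ).le (by positivity)
        (pow_le_pow_left₀ (by norm_num) (by norm_num) n)
    obtain ⟨-, h0, h1⟩ := hsplit γ hγΛ hγ0
    cases b <;> linarith
  have hthreshold : ∀ γ ∈ internalNodes Λ, 1 ≤ (k : ℝ) * (1 / 50 ^ n * f γ) := by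
    intro γ hγ
    have hscale : (k : ℝ) * (1 / 50 ^ n * (50 ^ n / k)) = 1 := by field_simp
    calc 1 = (k : ℝ) * (1 / 50 ^ n * (50 ^ n / k)) := hscale.symm
      _ ≤ k * (1 / 50 ^ n * f γ) := by
        gcongr
        exact hinternal γ (mem_filter.1 hγ).1 (mem_filter.1 hγ).2
  rw [show ((n : ℝ) - 1) / n = 1 - 1 / n by rw [sub_div, div_self (by positivity)]]
  exact hΛ.sum_internalNodes_rpow_add_one_le (by positivity)
    (div_le_one_of_le₀ (by linarith) (by positivity)) (by positivity)
    ((div_lt_one (by positivity)).2 (one_lt_pow₀ (by norm_num) (by omega))) hk' hf_root hpos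
    (fun γ hγ ↦ (hsplit γ (mem_filter.1 hγ).1 (mem_filter.1 hγ).2).1) hchild hthreshold

/-- Claim 4.2 in the paper (modulo the constant `c(n)`).  A compact
set of total measure `1` is partitioned along a finite admissible binary tree,
with leaves of measure `< 50^n/k`, internal nodes of measure `≥ 50^n/k`, and
balanced splits `|N_{αi}| ≥ |N_α|/25^n`, `|N_α| = |N_{α0}| + |N_{α1}|`.  Then
`Σ_{internal α} |N_α|^((n−1)/n) + 1 ≤ (1+λ̃)·k^(1/n)` with
`λ̃ = ((1/50^n)^((n−1)/n) + (1−1/50^n)^((n−1)/n) − 1)⁻¹`. -/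
theorem stmt_12 (n : ℕ) (hn : 2 ≤ n) (k : ℕ) (hk : 1 ≤ k)
    (Λ : Finset (List Bool)) (f : List Bool → ℝ)
    (hroot : [] ∈ Λ) (hf_root : f [] = 1)
    (hprefix : ∀ α ∈ Λ, ∀ β : List Bool, β <+: α → β ∈ Λ)
    (hsib : ∀ α : List Bool, α ++ [false] ∈ Λ ↔ α ++ [true] ∈ Λ)
    (hpos : ∀ α ∈ Λ, 0 < f α)
    (hsplit : ∀ α ∈ Λ, α ++ [false] ∈ Λ →
      f α = f (α ++ [false]) + f (α ++ [true]) ∧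
      f α / 25 ^ n ≤ f (α ++ [false]) ∧ f α / 25 ^ n ≤ f (α ++ [true]))
    (hleaf : ∀ α ∈ Λ, α ++ [false] ∉ Λ → f α < 50 ^ n / (k : ℝ))
    (hinternal : ∀ α ∈ Λ, α ++ [false] ∈ Λ → 50 ^ n / (k : ℝ) ≤ f α) :
    (∑ α ∈ Λ.filter (fun α => α ++ [false] ∈ Λ), f α ^ (((n : ℝ) - 1) / n)) + 1 ≤
      (1 + ((1 / 50 ^ n : ℝ) ^ (((n : ℝ) - 1) / n) +
          (1 - (1 / 50 ^ n : ℝ)) ^ (((n : ℝ) - 1) / n) - 1)⁻¹) *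
        (k : ℝ) ^ ((1 : ℝ) / n) :=
  stmt_12_general n hn k hk Λ f hroot hf_root hprefix hsib hpos hsplit hinternal
end

section
/- The ratio r ↦ v(9r/2, n)/v(r/2, n) of hyperbolic ball volumes is nondecreasing in r > 0, where v(t, n) = σ_{n−1}∫_0^t sinh^{n−1}(s) ds. -/
private lemma cross (u t : ℝ) (hu : 0 ≤ u) (hut : u ≤ t) :
    Real.sinh (9 * u) * Real.sinh t ≤ Real.sinh (9 * t) * Real.sinh u := by
  have h9 : ∀ x : ℝ, Real.sinh (9 * x) =
      4 * (4 * Real.sinh x ^ 3 + 3 * Real.sinh x) ^ 3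
        + 3 * (4 * Real.sinh x ^ 3 + 3 * Real.sinh x) := by
    intro x
    have h : (9 : ℝ) * x = 3 * (3 * x) := by ring
    rw [h, Real.sinh_three_mul, Real.sinh_three_mul]
  have hs : 0 ≤ Real.sinh u := by simpa using Real.sinh_le_sinh.2 hu
  have hsS : Real.sinh u ≤ Real.sinh t := Real.sinh_le_sinh.2 hut
  rw [h9, h9]
  set s := Real.sinh u
  set S := Real.sinh t
  have hS : 0 ≤ S := hs.trans hsS
  have hz : s ^ 2 ≤ S ^ 2 := by nlinarith
  have hQ : 4 * s^2 * (4 * s^2 + 3)^3 + 12 * s^2 + 9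
      ≤ 4 * S^2 * (4 * S^2 + 3)^3 + 12 * S^2 + 9 := by
    gcongr
  have e1 : (4 * (4 * s^3 + 3*s)^3 + 3 * (4 * s^3 + 3*s)) * S
      = s * S * (4 * s^2 * (4 * s^2 + 3)^3 + 12 * s^2 + 9) := by ring
  have e2 : (4 * (4 * S^3 + 3*S)^3 + 3 * (4 * S^3 + 3*S)) * s
      = s * S * (4 * S^2 * (4 * S^2 + 3)^3 + 12 * S^2 + 9) := by ring
  rw [e1, e2]
  exact mul_le_mul_of_nonneg_left hQ (mul_nonneg hs hS)

/-- the ratio `r ↦ v(9r/2,n)/v(r/2,n)` of hyperbolic ball volumes,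
`v(t,n) = σ_{n−1} ∫_0^t sinh^{n−1}(s) ds`, is nondecreasing in `r > 0`. -/
theorem stmt_16 (n : ℕ) (hn : 2 ≤ n) (σ : ℝ) (hσ : 0 < σ)
    (v : ℝ → ℝ)
    (hv : ∀ t : ℝ, v t = σ * ∫ s in (0 : ℝ)..t, Real.sinh s ^ (n - 1)) :
    ∀ r₁ r₂ : ℝ, 0 < r₁ → r₁ ≤ r₂ →
      v (9 * r₁ / 2) / v (r₁ / 2) ≤ v (9 * r₂ / 2) / v (r₂ / 2) := by
  intro r₁ r₂ hr₁ h12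
  set g : ℝ → ℝ := fun s => Real.sinh s ^ (n - 1) with hg
  have hgc : Continuous g := Real.continuous_sinh.pow _
  have hGc : Continuous (fun u => g (9 * u)) := hgc.comp (by continuity)
  -- cross inequality for g
  have crossg : ∀ u t : ℝ, 0 ≤ u → u ≤ t → g (9 * u) * g t ≤ g (9 * t) * g u := by
    intro u t hu hut
    have h := cross u t hu hut
    have h0 : 0 ≤ Real.sinh (9 * u) * Real.sinh t := by
      have h1 : 0 ≤ Real.sinh (9 * u) := by
        simpa using Real.sinh_le_sinh.2 (by linarith : (0:ℝ) ≤ 9 * u)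
      have h2 : 0 ≤ Real.sinh t := by
        simpa using Real.sinh_le_sinh.2 (hu.trans hut)
      exact mul_nonneg h1 h2
    calc g (9 * u) * g t = (Real.sinh (9*u) * Real.sinh t) ^ (n-1) := (mul_pow _ _ _).symm
      _ ≤ (Real.sinh (9*t) * Real.sinh u) ^ (n-1) := pow_le_pow_left₀ h0 h _
      _ = g (9 * t) * g u := mul_pow _ _ _
  set a := r₁ / 2 with hadef
  set A := r₂ / 2 with hAdef
  have ha : 0 < a := by positivity
  have haA : a ≤ A := by simp only [hadef, hAdef]; linarith
  have hA : 0 < A := ha.trans_le haA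
  set I : ℝ → ℝ := fun t => ∫ s in (0:ℝ)..t, g s with hI
  set J : ℝ → ℝ := fun t => ∫ u in (0:ℝ)..t, g (9 * u) with hJ
  -- substitution : v (9*t) relates
  have hsub : ∀ t : ℝ, (∫ s in (0:ℝ)..(9*t), g s) = 9 * J t := by
    intro t
    have := intervalIntegral.smul_integral_comp_mul_left (a := 0) (b := t) g 9
    simp only [mul_zero, smul_eq_mul] at this
    rw [← this]
  have hint : ∀ b c : ℝ, IntervalIntegrable g MeasureTheory.volume b c :=
    fun b c => hgc.intervalIntegrable b c
  have hintG : ∀ b c : ℝ, IntervalIntegrable (fun u => g (9*u)) MeasureTheory.volume b c :=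
    fun b c => hGc.intervalIntegrable b c
  -- positivity
  have hgpos : ∀ x : ℝ, 0 < x → 0 < g x := by
    intro x hx
    exact pow_pos (Real.sinh_pos_iff.2 hx) _
  have hIpos : ∀ t : ℝ, 0 < t → 0 < I t := by
    intro t ht
    exact intervalIntegral.intervalIntegral_pos_of_pos_on (hint 0 t)
      (fun x hx => hgpos x hx.1) ht
  have hga : 0 < g a := hgpos a ha
  have hGa : 0 ≤ g (9 * a) := le_of_lt (hgpos _ (by linarith))
  -- h1 : J a * g a ≤ g (9a) * I a
  have h1 : J a * g a ≤ g (9 * a) * I a := by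
    have := intervalIntegral.integral_mono_on (a := (0:ℝ)) (b := a)
      (f := fun u => g (9*u) * g a) (g := fun u => g (9*a) * g u) (μ := MeasureTheory.volume)
      (le_of_lt ha) ((hintG 0 a).mul_const _) ((hint 0 a).const_mul _)
      (fun x hx => crossg x a hx.1 hx.2)
    rwa [intervalIntegral.integral_mul_const, intervalIntegral.integral_const_mul] at this
  -- h2 : g(9a) * (I A - I a) ≤ (J A - J a) * g a
  have hIAa : I A - I a = ∫ s in a..A, g s :=
    intervalIntegral.integral_interval_sub_left (hint 0 A) (hint 0 a)
  have hJAa : J A - J a = ∫ u in a..A, g (9*u) :=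
    intervalIntegral.integral_interval_sub_left (hintG 0 A) (hintG 0 a)
  have h2 : g (9 * a) * (I A - I a) ≤ (J A - J a) * g a := by
    rw [hIAa, hJAa]
    have := intervalIntegral.integral_mono_on (a := a) (b := A)
      (f := fun u => g (9*a) * g u) (g := fun u => g (9*u) * g a) (μ := MeasureTheory.volume)
      haA ((hint a A).const_mul _) ((hintG a A).mul_const _)
      (fun x hx => crossg a x (le_of_lt ha) hx.1)
    rwa [intervalIntegral.integral_mul_const, intervalIntegral.integral_const_mul] at this
  have hIa : 0 < I a := hIpos a ha
  have hImono : 0 ≤ I A - I a := by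
    rw [hIAa]
    exact intervalIntegral.integral_nonneg haA
      (fun x hx => le_of_lt (hgpos x (lt_of_lt_of_le ha hx.1)))
  have hgnn : ∀ x : ℝ, 0 ≤ x → 0 ≤ g x := fun x hx =>
    pow_nonneg (by simpa using Real.sinh_le_sinh.2 hx) _
  have hJa : 0 ≤ J a := intervalIntegral.integral_nonneg (le_of_lt ha)
      (fun x hx => hgnn _ (by linarith [hx.1]))
  -- key : J a * I A ≤ J A * I a
  have key : J a * I A ≤ J A * I a := by nlinarith [mul_nonneg hJa hImono]
  -- rewrite v
  have e9a : 9 * r₁ / 2 = 9 * a := by rw [hadef]; ring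
  have e9A : 9 * r₂ / 2 = 9 * A := by rw [hAdef]; ring
  have hva : v a = σ * I a := hv a
  have hvA : v A = σ * I A := hv A
  have hv9a : v (9 * r₁ / 2) = σ * (9 * J a) := by rw [e9a, hv, hsub]
  have hv9A : v (9 * r₂ / 2) = σ * (9 * J A) := by rw [e9A, hv, hsub]
  have : v (r₁ / 2) = v a := rfl
  rw [this, hv9a, hv9A, hva]
  have : v (r₂ / 2) = v A := rfl
  rw [this, hvA]
  rw [div_le_div_iff₀ (mul_pos hσ hIa) (mul_pos hσ (hIpos A hA))]
  nlinarith [key, mul_pos hσ hσ]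
end
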